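/- Suppose at iteration k the estimate Q̂_k satisfies ||Q̂_k − Q_k||_∞ ≤ ε_app, where Q_k is the soft Q-function of the policy π_k under reward parameter θ_k, and the updated policy is π_{k+1}(a|s) ∝ exp(Q̂_k(s,a)). Let Q_{k+1/2} denote the soft Q-function of π_{k+1} under reward parameter θ_k, and let Q_{θ_k} denote the optimal soft Q-function under θ_k. Then: (i) Q_k(s,a) ≤ Q_{k+1/2}(s,a) + 2γε_app/(1−γ) for all (s,a), and (ii) ||Q_{θ_k} − Q_{k+1/2}||_∞ ≤ γ ||Q_{θ_k} − Q_k||_∞ + 2γε_app/(1−γ). -/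

import Mathlib

open Real BigOperators Finset

noncomputable section

/-- `P` is a transition kernel: each row `P s a ·` is a probability distribution. -/
def IsKernel {S A : Type} [Fintype S] (P : S → A → S → ℝ) : Prop :=
  (∀ s a s', 0 ≤ P s a s') ∧ ∀ s a, ∑ s', P s a s' = 1

/-- `p` is a policy: each `p s ·` is a probability distribution over actions. -/
def IsPolicy {S A : Type} [Fintype A] (p : S → A → ℝ) : Prop :=
  (∀ s a, 0 ≤ p s a) ∧ ∀ s, ∑ a, p s a = 1

/-- `η` is a probability distribution over states. -/
def IsDist {S : Type} [Fintype S] (η : S → ℝ) : Prop :=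
  (∀ s, 0 ≤ η s) ∧ ∑ s, η s = 1

/-- Distribution of the state at time `t` under initial distribution `η`,
policy `pol` and transition kernel `P`. -/
def stateDist {S A : Type} [Fintype S] [Fintype A]
    (P : S → A → S → ℝ) (pol : S → A → ℝ) (η : S → ℝ) : ℕ → S → ℝ
  | 0 => η
  | (t + 1) => fun s' => ∑ s, ∑ a, stateDist P pol η t s * pol s a * P s a s'

/-- `E_{τ ∼ (η, pol, P)} [ ∑_t γ^t f(s_t, a_t) ]`. -/
def discSum {S A : Type} [Fintype S] [Fintype A]
    (γ : ℝ) (P : S → A → S → ℝ) (pol : S → A → ℝ) (η : S → ℝ) (f : S → A → ℝ) : ℝ :=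
  ∑' t : ℕ, γ ^ t * ∑ s, ∑ a, stateDist P pol η t s * pol s a * f s a

/-- Discounted state-action visitation measure
`d(s,a) = (1-γ) pol(a|s) ∑_t γ^t Pr(s_t = s)`. -/
def visit {S A : Type} [Fintype S] [Fintype A]
    (γ : ℝ) (P : S → A → S → ℝ) (pol : S → A → ℝ) (η : S → ℝ) (s : S) (a : A) : ℝ :=
  (1 - γ) * pol s a * ∑' t : ℕ, γ ^ t * stateDist P pol η t s

/-- Log-sum-exp soft value function `V(s) = log ∑_a exp Q(s,a)`. -/
def lse {S A : Type} [Fintype A] (Q : S → A → ℝ) (s : S) : ℝ :=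
  Real.log (∑ a, Real.exp (Q s a))

/-- Softmax policy `π(a|s) = exp Q(s,a) / ∑_{a'} exp Q(s,a')`. -/
def softmax {S A : Type} [Fintype A] (Q : S → A → ℝ) (s : S) (a : A) : ℝ :=
  Real.exp (Q s a) / ∑ a', Real.exp (Q s a')

/-- Distribution of the state at time `t` starting from the fixed state `s0`,
following policy `pol` and kernel `P`. -/
def stateDistFrom {S A : Type} [Fintype S] [Fintype A] [DecidableEq S]
    (P : S → A → S → ℝ) (pol : S → A → ℝ) (s0 : S) : ℕ → S → ℝ
  | 0 => fun s => if s = s0 then 1 else 0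
  | (t + 1) => fun s' => ∑ s, ∑ a, stateDistFrom P pol s0 t s * pol s a * P s a s'

/-- Shannon entropy `H(p) = -∑_a p(a) log p(a)`. -/
def entropyFn {A : Type} [Fintype A] (p : A → ℝ) : ℝ :=
  ∑ a, -(p a * Real.log (p a))

/-- The soft value function of the policy `pol` under kernel `P` and reward `R`:
`V^π(s₀) = E_{τ∼(π,P)}[∑_t γ^t (R(s_t,a_t) + H(π(·|s_t))) | s_0 = s₀]`. -/
def Vpol {S A : Type} [Fintype S] [Fintype A] [DecidableEq S]
    (γ : ℝ) (P : S → A → S → ℝ) (pol : S → A → ℝ) (R : S → A → ℝ) (s0 : S) : ℝ :=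
  ∑' t : ℕ, γ ^ t *
    ∑ s, stateDistFrom P pol s0 t s * (entropyFn (pol s) + ∑ a, pol s a * R s a)

/-- The soft Q-function of the policy `pol`:
`Q^π(s,a) = R(s,a) + γ ∑_{s'} P(s'|s,a) V^π(s')`. -/
def Qpol {S A : Type} [Fintype S] [Fintype A] [DecidableEq S]
    (γ : ℝ) (P : S → A → S → ℝ) (pol : S → A → ℝ) (R : S → A → ℝ) (s : S) (a : A) : ℝ :=
  R s a + γ * ∑ s', P s a s' * Vpol γ P pol R s'

section Aux
variable {S A : Type} [Fintype S] [Fintype A] [DecidableEq S]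

lemma sdf_nonneg {P : S → A → S → ℝ} {pol : S → A → ℝ}
    (hP : IsKernel P) (hpol : IsPolicy pol) :
    ∀ (t : ℕ) (s0 s : S), 0 ≤ stateDistFrom P pol s0 t s := by
  intro t
  induction t with
  | zero => intro s0 s; simp only [stateDistFrom]; positivity
  | succ t ih =>
    intro s0 s
    simp only [stateDistFrom]
    apply Finset.sum_nonneg; intro s1 _
    apply Finset.sum_nonneg; intro a _
    have := ih s0 s1
    have := hpol.1 s1 a
    have := hP.1 s1 a s
    positivity

lemma sdf_sum {P : S → A → S → ℝ} {pol : S → A → ℝ}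
    (hP : IsKernel P) (hpol : IsPolicy pol) :
    ∀ (t : ℕ) (s0 : S), ∑ s, stateDistFrom P pol s0 t s = 1 := by
  intro t
  induction t with
  | zero => intro s0; simp [stateDistFrom]
  | succ t ih =>
    intro s0
    simp only [stateDistFrom]
    rw [Finset.sum_comm]
    have : ∀ s1 ∈ Finset.univ (α := S),
        ∑ s : S, ∑ a, stateDistFrom P pol s0 t s1 * pol s1 a * P s1 a s
          = stateDistFrom P pol s0 t s1 := by
      intro s1 _
      rw [Finset.sum_comm]
      have : ∀ a ∈ Finset.univ (α := A),
          ∑ s : S, stateDistFrom P pol s0 t s1 * pol s1 a * P s1 a s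
            = stateDistFrom P pol s0 t s1 * pol s1 a := by
        intro a _
        rw [← Finset.mul_sum, hP.2 s1 a, mul_one]
      rw [Finset.sum_congr rfl this, ← Finset.mul_sum, hpol.2 s1, mul_one]
    rw [Finset.sum_congr rfl this, ih]

lemma sdf_le_one {P : S → A → S → ℝ} {pol : S → A → ℝ}
    (hP : IsKernel P) (hpol : IsPolicy pol) (t : ℕ) (s0 s : S) :
    stateDistFrom P pol s0 t s ≤ 1 := by
  rw [← sdf_sum hP hpol t s0]
  exact Finset.single_le_sum (fun s' _ => sdf_nonneg hP hpol t s0 s') (Finset.mem_univ s)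

lemma sdf_markov {P : S → A → S → ℝ} {pol : S → A → ℝ} :
    ∀ (t : ℕ) (s0 s : S), stateDistFrom P pol s0 (t + 1) s
      = ∑ s1, (∑ a, pol s0 a * P s0 a s1) * stateDistFrom P pol s1 t s := by
  intro t
  induction t with
  | zero =>
    intro s0 s
    simp [stateDistFrom, Finset.sum_mul]
  | succ t ih =>
    intro s0 s
    have h1 : stateDistFrom P pol s0 (t + 2) s
        = ∑ s2, ∑ a, stateDistFrom P pol s0 (t+1) s2 * pol s2 a * P s2 a s := rfl
    rw [h1]
    have h2 : ∀ s2 ∈ (Finset.univ : Finset S),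
        ∑ a, stateDistFrom P pol s0 (t+1) s2 * pol s2 a * P s2 a s
        = ∑ s1, ∑ a, (∑ a', pol s0 a' * P s0 a' s1) * stateDistFrom P pol s1 t s2
            * pol s2 a * P s2 a s := by
      intro s2 _
      rw [ih s0 s2, Finset.sum_comm]
      apply Finset.sum_congr rfl; intro a _
      simp only [Finset.sum_mul]
    rw [Finset.sum_congr rfl h2, Finset.sum_comm]
    apply Finset.sum_congr rfl; intro s1 _
    have h4 : stateDistFrom P pol s1 (t+1) s
        = ∑ s2, ∑ a, stateDistFrom P pol s1 t s2 * pol s2 a * P s2 a s := rfl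
    rw [h4]
    simp only [Finset.mul_sum]
    apply Finset.sum_congr rfl; intro s2 _
    apply Finset.sum_congr rfl; intro a _
    ring


lemma vpol_summable {γ : ℝ} (hγ0 : 0 ≤ γ) (hγ1 : γ < 1)
    {P : S → A → S → ℝ} {pol : S → A → ℝ}
    (hP : IsKernel P) (hpol : IsPolicy pol) (g : S → ℝ) (s0 : S) :
    Summable (fun t => γ ^ t * ∑ s, stateDistFrom P pol s0 t s * g s) := by
  set C : ℝ := ∑ s, |g s| with hCdef
  have hC : ∀ s, |g s| ≤ C :=
    fun s => Finset.single_le_sum (fun s' _ => abs_nonneg (g s')) (Finset.mem_univ s)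
  have hC0 : 0 ≤ C := Finset.sum_nonneg fun s _ => abs_nonneg _
  apply Summable.of_norm_bounded (g := fun t => γ ^ t * C)
    ((summable_geometric_of_lt_one hγ0 hγ1).mul_right C)
  intro t
  rw [Real.norm_eq_abs, abs_mul, abs_pow, abs_of_nonneg hγ0]
  apply mul_le_mul_of_nonneg_left _ (pow_nonneg hγ0 t)
  calc |∑ s, stateDistFrom P pol s0 t s * g s|
      ≤ ∑ s, |stateDistFrom P pol s0 t s * g s| := Finset.abs_sum_le_sum_abs _ _
    _ ≤ ∑ s, stateDistFrom P pol s0 t s * C := by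
        apply Finset.sum_le_sum; intro s _
        rw [abs_mul, abs_of_nonneg (sdf_nonneg hP hpol t s0 s)]
        exact mul_le_mul_of_nonneg_left (hC s) (sdf_nonneg hP hpol t s0 s)
    _ = C := by rw [← Finset.sum_mul, sdf_sum hP hpol, one_mul]

lemma vpol_bellman {γ : ℝ} (hγ0 : 0 ≤ γ) (hγ1 : γ < 1)
    {P : S → A → S → ℝ} {pol : S → A → ℝ}
    (hP : IsKernel P) (hpol : IsPolicy pol) (R : S → A → ℝ) (s0 : S) :
    Vpol γ P pol R s0 = (entropyFn (pol s0) + ∑ a, pol s0 a * R s0 a)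
      + γ * ∑ s1, (∑ a, pol s0 a * P s0 a s1) * Vpol γ P pol R s1 := by
  set g : S → ℝ := fun s => entropyFn (pol s) + ∑ a, pol s a * R s a with hg
  have hsum : ∀ s0 : S, Summable (fun t => γ ^ t * ∑ s, stateDistFrom P pol s0 t s * g s) :=
    vpol_summable hγ0 hγ1 hP hpol g
  have hV : ∀ s0 : S, Vpol γ P pol R s0 = ∑' t, γ ^ t * ∑ s, stateDistFrom P pol s0 t s * g s :=
    fun _ => rfl
  rw [hV, Summable.tsum_eq_zero_add (hsum s0)]
  have h0 : γ ^ 0 * ∑ s, stateDistFrom P pol s0 0 s * g s = g s0 := by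
    simp [stateDistFrom]
  rw [h0]
  have key : ∀ t, γ ^ (t+1) * ∑ s, stateDistFrom P pol s0 (t+1) s * g s
      = ∑ s1, (∑ a, pol s0 a * P s0 a s1) *
          (γ * (γ ^ t * ∑ s, stateDistFrom P pol s1 t s * g s)) := by
    intro t
    have h1 : ∑ s, stateDistFrom P pol s0 (t+1) s * g s
        = ∑ s1, (∑ a, pol s0 a * P s0 a s1) * ∑ s, stateDistFrom P pol s1 t s * g s := by
      have : ∀ s ∈ (Finset.univ : Finset S), stateDistFrom P pol s0 (t+1) s * g s
          = ∑ s1, (∑ a, pol s0 a * P s0 a s1) * stateDistFrom P pol s1 t s * g s := by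
        intro s _; rw [sdf_markov t s0 s, Finset.sum_mul]
      rw [Finset.sum_congr rfl this, Finset.sum_comm]
      apply Finset.sum_congr rfl; intro s1 _
      rw [Finset.mul_sum]
      apply Finset.sum_congr rfl; intro s _
      ring
    rw [h1, Finset.mul_sum]
    apply Finset.sum_congr rfl; intro s1 _
    rw [pow_succ]
    ring
  have h2 : ∑' t, γ ^ (t+1) * ∑ s, stateDistFrom P pol s0 (t+1) s * g s
      = γ * ∑ s1, (∑ a, pol s0 a * P s0 a s1) * Vpol γ P pol R s1 := by
    calc ∑' t, γ ^ (t+1) * ∑ s, stateDistFrom P pol s0 (t+1) s * g s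
        = ∑' t, ∑ s1, (∑ a, pol s0 a * P s0 a s1) *
            (γ * (γ ^ t * ∑ s, stateDistFrom P pol s1 t s * g s)) := by
          exact tsum_congr key
      _ = ∑ s1, ∑' t, (∑ a, pol s0 a * P s0 a s1) *
            (γ * (γ ^ t * ∑ s, stateDistFrom P pol s1 t s * g s)) := by
          apply Summable.tsum_finsetSum
          intro s1 _
          exact ((hsum s1).mul_left γ).mul_left _
      _ = ∑ s1, (∑ a, pol s0 a * P s0 a s1) *
            (γ * ∑' t, γ ^ t * ∑ s, stateDistFrom P pol s1 t s * g s) := by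
          apply Finset.sum_congr rfl; intro s1 _
          rw [tsum_mul_left, tsum_mul_left]
      _ = γ * ∑ s1, (∑ a, pol s0 a * P s0 a s1) * Vpol γ P pol R s1 := by
          rw [Finset.mul_sum]
          apply Finset.sum_congr rfl; intro s1 _
          rw [hV s1]; ring
  rw [h2]

lemma vpol_bellman_q {γ : ℝ} (hγ0 : 0 ≤ γ) (hγ1 : γ < 1)
    {P : S → A → S → ℝ} {pol : S → A → ℝ}
    (hP : IsKernel P) (hpol : IsPolicy pol) (R : S → A → ℝ) (s0 : S) :
    Vpol γ P pol R s0 = entropyFn (pol s0) + ∑ a, pol s0 a * Qpol γ P pol R s0 a := by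
  rw [vpol_bellman hγ0 hγ1 hP hpol R s0]
  simp only [Qpol, mul_add, Finset.sum_add_distrib]
  rw [add_assoc]
  congr 1
  congr 1
  have hl : γ * ∑ s1, (∑ a, pol s0 a * P s0 a s1) * Vpol γ P pol R s1
      = ∑ a, ∑ s1, γ * (pol s0 a * P s0 a s1 * Vpol γ P pol R s1) := by
    rw [Finset.mul_sum, Finset.sum_comm]
    apply Finset.sum_congr rfl; intro s1 _
    rw [Finset.sum_mul, Finset.mul_sum]
  rw [hl]
  apply Finset.sum_congr rfl; intro a _
  rw [Finset.mul_sum, Finset.mul_sum]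
  apply Finset.sum_congr rfl; intro s1 _
  ring

variable [Nonempty A]

lemma sum_exp_pos (f : A → ℝ) : 0 < ∑ a, Real.exp (f a) :=
  Finset.sum_pos (fun a _ => Real.exp_pos _) Finset.univ_nonempty

lemma softmax_isPolicy (Q : S → A → ℝ) : IsPolicy (softmax Q) := by
  constructor
  · intro s a; unfold softmax
    have := sum_exp_pos (fun a => Q s a)
    positivity
  · intro s; unfold softmax
    rw [← Finset.sum_div, div_self (ne_of_gt (sum_exp_pos (fun a => Q s a)))]

lemma log_softmax (Q : S → A → ℝ) (s : S) (a : A) :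
    Real.log (softmax Q s a) = Q s a - lse Q s := by
  unfold softmax lse
  rw [Real.log_div (Real.exp_ne_zero _) (ne_of_gt (sum_exp_pos (fun a => Q s a))),
    Real.log_exp]

lemma gibbs (p : A → ℝ) (hp0 : ∀ a, 0 ≤ p a) (hp1 : ∑ a, p a = 1) (f : A → ℝ) :
    ∑ a, p a * (f a - Real.log (p a)) ≤ Real.log (∑ a, Real.exp (f a)) := by
  set Z := ∑ a, Real.exp (f a) with hZ
  have hZpos : 0 < Z := sum_exp_pos f
  have key : ∀ a, p a * (f a - Real.log (p a))
      ≤ Real.exp (f a) / Z - p a + p a * Real.log Z := by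
    intro a
    rcases eq_or_lt_of_le (hp0 a) with h | h
    · rw [← h]
      simp only [zero_mul, sub_zero, add_zero]
      positivity
    · have hq : 0 < Real.exp (f a) / Z := by positivity
      have hlog : Real.log (Real.exp (f a) / Z / p a) ≤ Real.exp (f a) / Z / p a - 1 :=
        Real.log_le_sub_one_of_pos (by positivity)
      have e1 : Real.log (Real.exp (f a) / Z / p a)
          = f a - Real.log Z - Real.log (p a) := by
        rw [Real.log_div (ne_of_gt hq) (ne_of_gt h),
          Real.log_div (Real.exp_ne_zero _) (ne_of_gt hZpos), Real.log_exp]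
      rw [e1] at hlog
      have h2 := mul_le_mul_of_nonneg_left hlog (le_of_lt h)
      have e2 : p a * (Real.exp (f a) / Z / p a - 1) = Real.exp (f a) / Z - p a := by
        field_simp
      rw [e2] at h2
      nlinarith [h2]
  calc ∑ a, p a * (f a - Real.log (p a))
      ≤ ∑ a, (Real.exp (f a) / Z - p a + p a * Real.log Z) :=
        Finset.sum_le_sum (fun a _ => key a)
    _ = (∑ a, Real.exp (f a) / Z) - (∑ a, p a) + (∑ a, p a) * Real.log Z := by
        rw [Finset.sum_add_distrib, Finset.sum_sub_distrib, Finset.sum_mul]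
    _ = Real.log Z := by
        rw [← Finset.sum_div, ← hZ, div_self (ne_of_gt hZpos), hp1]; ring

lemma lse_le (f g : A → ℝ) (c : ℝ) (h : ∀ a, f a ≤ g a + c) :
    Real.log (∑ a, Real.exp (f a)) ≤ Real.log (∑ a, Real.exp (g a)) + c := by
  have h1 : ∑ a, Real.exp (f a) ≤ Real.exp c * ∑ a, Real.exp (g a) := by
    rw [Finset.mul_sum]
    apply Finset.sum_le_sum; intro a _
    rw [← Real.exp_add]
    exact Real.exp_le_exp.mpr (by linarith [h a])
  calc Real.log (∑ a, Real.exp (f a))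
      ≤ Real.log (Real.exp c * ∑ a, Real.exp (g a)) :=
        Real.log_le_log (sum_exp_pos f) h1
    _ = Real.log (∑ a, Real.exp (g a)) + c := by
        rw [Real.log_mul (Real.exp_ne_zero c) (ne_of_gt (sum_exp_pos g)), Real.log_exp]
        ring

lemma entropy_sum (p : A → ℝ) (q : A → ℝ) :
    entropyFn p + ∑ a, p a * q a = ∑ a, p a * (q a - Real.log (p a)) := by
  unfold entropyFn
  rw [← Finset.sum_add_distrib]
  apply Finset.sum_congr rfl; intro a _
  ring

lemma softmax_avg (Q : S → A → ℝ) (s : S) (x : A → ℝ) :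
    ∑ a, softmax Q s a * (x a - Real.log (softmax Q s a))
      = (∑ a, softmax Q s a * (x a - Q s a)) + lse Q s := by
  have h1 : ∀ a ∈ (Finset.univ : Finset A),
      softmax Q s a * (x a - Real.log (softmax Q s a))
        = softmax Q s a * (x a - Q s a) + softmax Q s a * lse Q s := by
    intro a _; rw [log_softmax]; ring
  rw [Finset.sum_congr rfl h1, Finset.sum_add_distrib, ← Finset.sum_mul,
    (softmax_isPolicy Q).2 s, one_mul]

lemma avg_le_avg_add (p : A → ℝ) (hp0 : ∀ a, 0 ≤ p a) (hp1 : ∑ a, p a = 1)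
    (x y : A → ℝ) (ε : ℝ) (h : ∀ a, x a ≤ y a + ε) :
    ∑ a, p a * x a ≤ (∑ a, p a * y a) + ε := by
  calc ∑ a, p a * x a ≤ ∑ a, p a * (y a + ε) :=
        Finset.sum_le_sum (fun a _ => mul_le_mul_of_nonneg_left (h a) (hp0 a))
    _ = (∑ a, p a * y a) + (∑ a, p a) * ε := by
        rw [Finset.sum_mul, ← Finset.sum_add_distrib]
        apply Finset.sum_congr rfl; intro a _; ring
    _ = (∑ a, p a * y a) + ε := by rw [hp1, one_mul]

lemma avg_le (p : A → ℝ) (hp0 : ∀ a, 0 ≤ p a) (hp1 : ∑ a, p a = 1)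
    (x : A → ℝ) (c : ℝ) (h : ∀ a, x a ≤ c) : ∑ a, p a * x a ≤ c := by
  have h2 := avg_le_avg_add p hp0 hp1 x (fun _ => 0) c (by simpa using h)
  simpa using h2

lemma gibbs' (p : A → ℝ) (hp0 : ∀ a, 0 ≤ p a) (hp1 : ∑ a, p a = 1)
    (Q : S → A → ℝ) (s : S) :
    ∑ a, p a * (Q s a - Real.log (p a)) ≤ lse Q s := by
  unfold lse; exact gibbs p hp0 hp1 (fun a => Q s a)

lemma lse_le' (Q1 Q2 : S → A → ℝ) (s : S) (c : ℝ) (h : ∀ a, Q1 s a ≤ Q2 s a + c) :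
    lse Q1 s ≤ lse Q2 s + c := by
  unfold lse; exact lse_le _ _ c h

end Aux

/-- **Lemma 6, approximate soft policy improvement.**
Suppose `‖Q̂_k - Q_k‖_∞ ≤ ε_app`, where `Q_k` is the soft Q-function of `π_k` under
reward parameter `θ_k`, and `π_{k+1}(a|s) ∝ exp Q̂_k(s,a)`.  With `Q_{k+1/2}` the soft
Q-function of `π_{k+1}` under `θ_k` and `Q_{θ_k}` the optimal soft Q-function, then
(i) `Q_k(s,a) ≤ Q_{k+1/2}(s,a) + 2γ ε_app/(1-γ)` for all `(s,a)`, and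
(ii) `‖Q_{θ_k} - Q_{k+1/2}‖_∞ ≤ γ ‖Q_{θ_k} - Q_k‖_∞ + 2γ ε_app/(1-γ)`. -/
theorem stmt17 {S A : Type} [Fintype S] [Fintype A] [Nonempty S] [Nonempty A]
    [DecidableEq S] (d : ℕ)
    (γ : ℝ) (hγ : γ ∈ Set.Ioo (0 : ℝ) 1)
    (Phat : S → A → S → ℝ) (hPhat : IsKernel Phat)
    (r : S → A → EuclideanSpace ℝ (Fin d) → ℝ) (U : S → A → ℝ)
    (θk : EuclideanSpace ℝ (Fin d))
    (πk : S → A → ℝ) (hπk : IsPolicy πk)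
    (εapp : ℝ)
    (Qhat : S → A → ℝ)
    (hQhat : ∀ s a, |Qhat s a - Qpol γ Phat πk (fun s a => r s a θk + U s a) s a| ≤ εapp)
    (Qopt : S → A → ℝ)
    (hQopt : ∀ s a, Qopt s a = r s a θk + U s a + γ * ∑ s', Phat s a s' * lse Qopt s') :
    (∀ s a,
      Qpol γ Phat πk (fun s a => r s a θk + U s a) s a ≤
        Qpol γ Phat (softmax Qhat) (fun s a => r s a θk + U s a) s a +
          2 * γ * εapp / (1 - γ)) ∧
    (∀ s a,
      |Qopt s a - Qpol γ Phat (softmax Qhat) (fun s a => r s a θk + U s a) s a| ≤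
        γ * Finset.univ.sup' Finset.univ_nonempty
            (fun p : S × A =>
              |Qopt p.1 p.2 - Qpol γ Phat πk (fun s a => r s a θk + U s a) p.1 p.2|) +
          2 * γ * εapp / (1 - γ)) := by
  obtain ⟨hγ0, hγ1⟩ := hγ
  have h1γ : 0 < 1 - γ := by linarith
  set Rf : S → A → ℝ := fun s a => r s a θk + U s a with hRf
  have hQopt' : ∀ s a, Qopt s a = Rf s a + γ * ∑ s', Phat s a s' * lse Qopt s' := by
    intro s a; simp only [hRf]; exact hQopt s a
  have hπ' : IsPolicy (softmax Qhat) := softmax_isPolicy Qhat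
  have hε : 0 ≤ εapp :=
    le_trans (abs_nonneg _) (hQhat (Classical.arbitrary S) (Classical.arbitrary A))
  have sumPdiff : ∀ (x y : S → ℝ) (s : S) (a : A),
      (γ * ∑ s', Phat s a s' * x s') - (γ * ∑ s', Phat s a s' * y s')
        = γ * ∑ s', Phat s a s' * (x s' - y s') := by
    intro x y s a
    have h : ∑ s', Phat s a s' * (x s' - y s')
        = ∑ s', (Phat s a s' * x s' - Phat s a s' * y s') :=
      Finset.sum_congr rfl (fun s' _ => by ring)
    rw [h, Finset.sum_sub_distrib]; ring
  have kernAvg : ∀ (s : S) (a : A) (x : S → ℝ) (c : ℝ), (∀ s', x s' ≤ c) →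
      ∑ s', Phat s a s' * x s' ≤ c := by
    intro s a x c h
    exact avg_le (fun s' => Phat s a s') (fun s' => hPhat.1 s a s') (hPhat.2 s a) x c h
  have hVk : ∀ s, Vpol γ Phat πk Rf s
      = ∑ a, πk s a * (Qpol γ Phat πk Rf s a - Real.log (πk s a)) := by
    intro s; rw [vpol_bellman_q (le_of_lt hγ0) hγ1 hPhat hπk Rf s, entropy_sum]
  have hV' : ∀ s, Vpol γ Phat (softmax Qhat) Rf s
      = ∑ a, softmax Qhat s a *
          (Qpol γ Phat (softmax Qhat) Rf s a - Real.log (softmax Qhat s a)) := by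
    intro s; rw [vpol_bellman_q (le_of_lt hγ0) hγ1 hPhat hπ' Rf s, entropy_sum]
  have hQdiff : ∀ s a, Qpol γ Phat πk Rf s a - Qpol γ Phat (softmax Qhat) Rf s a
      = γ * ∑ s', Phat s a s' *
          (Vpol γ Phat πk Rf s' - Vpol γ Phat (softmax Qhat) Rf s') := by
    intro s a
    have h := sumPdiff (Vpol γ Phat πk Rf) (Vpol γ Phat (softmax Qhat) Rf) s a
    simp only [Qpol]
    linarith [h]
  have hQoptdiff : ∀ s a, Qopt s a - Qpol γ Phat (softmax Qhat) Rf s a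
      = γ * ∑ s', Phat s a s' * (lse Qopt s' - Vpol γ Phat (softmax Qhat) Rf s') := by
    intro s a
    have h := sumPdiff (fun s' => lse Qopt s') (Vpol γ Phat (softmax Qhat) Rf) s a
    rw [hQopt' s a]
    simp only [Qpol]
    linarith [h]
  have hQoptdiff2 : ∀ s a, Qpol γ Phat (softmax Qhat) Rf s a - Qopt s a
      = γ * ∑ s', Phat s a s' * (Vpol γ Phat (softmax Qhat) Rf s' - lse Qopt s') := by
    intro s a
    have h := sumPdiff (Vpol γ Phat (softmax Qhat) Rf) (fun s' => lse Qopt s') s a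
    rw [hQopt' s a]
    simp only [Qpol]
    linarith [h]
  have hQle1 : ∀ s a, Qpol γ Phat πk Rf s a ≤ Qhat s a + εapp := by
    intro s a; linarith [(abs_le.mp (hQhat s a)).1]
  have hQle2 : ∀ s a, Qhat s a ≤ Qpol γ Phat πk Rf s a + εapp := by
    intro s a; linarith [(abs_le.mp (hQhat s a)).2]
  have a3 : ∀ s, lse Qhat s
      = ∑ a, softmax Qhat s a * (Qhat s a - Real.log (softmax Qhat s a)) := by
    intro s
    have h := softmax_avg Qhat s (fun a => Qhat s a)
    simp only [sub_self, mul_zero, Finset.sum_const_zero, zero_add] at h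
    rw [h]
  have a4 : ∀ s, (∑ a, softmax Qhat s a * (Qhat s a - Real.log (softmax Qhat s a)))
      ≤ (∑ a, softmax Qhat s a *
          (Qpol γ Phat πk Rf s a - Real.log (softmax Qhat s a))) + εapp := by
    intro s
    exact avg_le_avg_add (softmax Qhat s) (hπ'.1 s) (hπ'.2 s) _ _ εapp
      (fun a => by have := hQle2 s a; linarith)
  have stepA : ∀ s, Vpol γ Phat πk Rf s
      ≤ (∑ a, softmax Qhat s a *
          (Qpol γ Phat πk Rf s a - Real.log (softmax Qhat s a))) + 2*εapp := by
    intro s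
    have a1 : Vpol γ Phat πk Rf s
        ≤ (∑ a, πk s a * (Qhat s a - Real.log (πk s a))) + εapp := by
      rw [hVk s]
      exact avg_le_avg_add (πk s) (hπk.1 s) (hπk.2 s) _ _ εapp
        (fun a => by have := hQle1 s a; linarith)
    have a2 : (∑ a, πk s a * (Qhat s a - Real.log (πk s a))) ≤ lse Qhat s :=
      gibbs' (πk s) (hπk.1 s) (hπk.2 s) Qhat s
    have a3' := a3 s
    have a4' := a4 s
    linarith
  set D := Finset.univ.sup' Finset.univ_nonempty
      (fun s => Vpol γ Phat πk Rf s - Vpol γ Phat (softmax Qhat) Rf s) with hDdef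
  have hDle : ∀ s, Vpol γ Phat πk Rf s - Vpol γ Phat (softmax Qhat) Rf s ≤ D := by
    intro s; rw [hDdef]
    exact Finset.le_sup' (fun s => Vpol γ Phat πk Rf s - Vpol γ Phat (softmax Qhat) Rf s)
      (Finset.mem_univ s)
  have hQDle : ∀ s a, Qpol γ Phat πk Rf s a - Qpol γ Phat (softmax Qhat) Rf s a ≤ γ * D := by
    intro s a; rw [hQdiff s a]
    exact mul_le_mul_of_nonneg_left (kernAvg s a _ D (fun s' => hDle s')) (le_of_lt hγ0)
  have hDbound : D ≤ 2*εapp/(1-γ) := by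
    have h1 : D ≤ 2*εapp + γ*D := by
      rw [hDdef]
      apply Finset.sup'_le
      intro s _
      have b1 := stepA s
      have b2 : (∑ a, softmax Qhat s a *
            (Qpol γ Phat πk Rf s a - Real.log (softmax Qhat s a)))
          ≤ (∑ a, softmax Qhat s a *
              (Qpol γ Phat (softmax Qhat) Rf s a - Real.log (softmax Qhat s a))) + γ*D :=
        avg_le_avg_add (softmax Qhat s) (hπ'.1 s) (hπ'.2 s) _ _ (γ*D)
          (fun a => by have := hQDle s a; linarith)
      have b3 := hV' s
      rw [← hDdef]
      linarith
    rw [le_div_iff₀ h1γ]; nlinarith [h1]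
  have hQkQ'bound : ∀ s a, Qpol γ Phat πk Rf s a - Qpol γ Phat (softmax Qhat) Rf s a
      ≤ γ * (2*εapp/(1-γ)) := by
    intro s a
    rw [hQdiff s a]
    exact mul_le_mul_of_nonneg_left
      (kernAvg s a _ _ (fun s' => le_trans (hDle s') hDbound)) (le_of_lt hγ0)
  have part1 : ∀ s a, Qpol γ Phat πk Rf s a
      ≤ Qpol γ Phat (softmax Qhat) Rf s a + 2*γ*εapp/(1-γ) := by
    intro s a
    have h1 := hQkQ'bound s a
    have h2 : γ * (2*εapp/(1-γ)) = 2*γ*εapp/(1-γ) := by ring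
    linarith
  -- optimality: V' ≤ V*
  have hV'opt : ∀ s, Vpol γ Phat (softmax Qhat) Rf s ≤ lse Qopt s := by
    have hEle : ∀ s, Vpol γ Phat (softmax Qhat) Rf s - lse Qopt s
        ≤ Finset.univ.sup' Finset.univ_nonempty
            (fun s => Vpol γ Phat (softmax Qhat) Rf s - lse Qopt s) :=
      fun s => Finset.le_sup' (fun s => Vpol γ Phat (softmax Qhat) Rf s - lse Qopt s)
        (Finset.mem_univ s)
    set E := Finset.univ.sup' Finset.univ_nonempty
        (fun s => Vpol γ Phat (softmax Qhat) Rf s - lse Qopt s) with hEdef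
    have h1 : E ≤ γ * E := by
      rw [hEdef]
      apply Finset.sup'_le
      intro s _
      have c2 : ∑ a, softmax Qhat s a * (Qopt s a - Real.log (softmax Qhat s a))
          ≤ lse Qopt s := gibbs' (softmax Qhat s) (hπ'.1 s) (hπ'.2 s) Qopt s
      have c3 : (∑ a, softmax Qhat s a *
            (Qpol γ Phat (softmax Qhat) Rf s a - Real.log (softmax Qhat s a)))
          ≤ (∑ a, softmax Qhat s a * (Qopt s a - Real.log (softmax Qhat s a))) + γ*E := by
        apply avg_le_avg_add (softmax Qhat s) (hπ'.1 s) (hπ'.2 s) _ _ (γ*E)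
        intro a
        have d1 : Qpol γ Phat (softmax Qhat) Rf s a - Qopt s a ≤ γ * E := by
          rw [hQoptdiff2 s a]
          exact mul_le_mul_of_nonneg_left
            (kernAvg s a _ E (fun s' => hEle s')) (le_of_lt hγ0)
        linarith
      have b3 := hV' s
      rw [← hEdef]
      linarith
    have hE0 : E ≤ 0 := by nlinarith [h1]
    intro s
    have := hEle s
    linarith
  set M := Finset.univ.sup' Finset.univ_nonempty
      (fun p : S × A => |Qopt p.1 p.2 - Qpol γ Phat πk Rf p.1 p.2|) with hMdef
  have hMle : ∀ s a, |Qopt s a - Qpol γ Phat πk Rf s a| ≤ M := by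
    intro s a; rw [hMdef]
    exact Finset.le_sup' (fun p : S × A => |Qopt p.1 p.2 - Qpol γ Phat πk Rf p.1 p.2|)
      (Finset.mem_univ (s, a))
  have hM0 : 0 ≤ M :=
    le_trans (abs_nonneg _) (hMle (Classical.arbitrary S) (Classical.arbitrary A))
  have stepD : ∀ s, lse Qopt s - Vpol γ Phat (softmax Qhat) Rf s ≤ M + 2*εapp/(1-γ) := by
    intro s
    have d1 : lse Qopt s ≤ lse (Qpol γ Phat πk Rf) s + M :=
      lse_le' _ _ s M (fun a => by have := (abs_le.mp (hMle s a)).2; linarith)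
    have d2 : lse (Qpol γ Phat πk Rf) s ≤ lse Qhat s + εapp :=
      lse_le' _ _ s εapp (fun a => hQle1 s a)
    have d3 := a3 s
    have d4 := a4 s
    have d5 : (∑ a, softmax Qhat s a *
          (Qpol γ Phat πk Rf s a - Real.log (softmax Qhat s a)))
        ≤ (∑ a, softmax Qhat s a *
            (Qpol γ Phat (softmax Qhat) Rf s a - Real.log (softmax Qhat s a)))
            + γ*(2*εapp/(1-γ)) :=
      avg_le_avg_add (softmax Qhat s) (hπ'.1 s) (hπ'.2 s) _ _ _
        (fun a => by have := hQkQ'bound s a; linarith)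
    have d6 := hV' s
    have heq : 2*εapp + γ*(2*εapp/(1-γ)) = 2*εapp/(1-γ) := by
      field_simp; ring
    linarith
  refine ⟨part1, ?_⟩
  intro s a
  have e1 := hQoptdiff s a
  have e2 : ∑ s', Phat s a s' * (lse Qopt s' - Vpol γ Phat (softmax Qhat) Rf s')
      ≤ M + 2*εapp/(1-γ) := kernAvg s a _ _ (fun s' => stepD s')
  have e3 : 0 ≤ ∑ s', Phat s a s' * (lse Qopt s' - Vpol γ Phat (softmax Qhat) Rf s') :=
    Finset.sum_nonneg (fun s' _ => mul_nonneg (hPhat.1 s a s')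
      (by have := hV'opt s'; linarith))
  rw [abs_le]
  have hpos : 0 ≤ 2*γ*εapp/(1-γ) := div_nonneg (by positivity) (le_of_lt h1γ)
  constructor
  · nlinarith [e1, e3, hM0, hγ0, hpos, mul_le_mul_of_nonneg_left e2 (le_of_lt hγ0)]
  · have h6 := mul_le_mul_of_nonneg_left e2 (le_of_lt hγ0)
    have h7 : γ * (M + 2*εapp/(1-γ)) = γ * M + 2*γ*εapp/(1-γ) := by ring
    linarith [e1, h6]
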